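/- For every synchronous intersection context γ and every intersection policy σ for γ, there exists an action protocol P implementing the knowledge-based program P^σ with respect to γ, and any two implementations are behaviorally equivalent. Moreover, if σ is a correct intersection policy with respect to γ, then every implementation P of P^σ with respect to γ satisfies Safety and Validity. -/

import Mathlib

open scoped Classical

noncomputable section

namespace Inter

/-- Actions available to each agent. -/
inductive Act where
  | go
  | noop
deriving DecidableEq

/-- A move through the intersection: an incoming lane paired with an outgoing lane. -/
abbrev Move (kin kout : ℕ) := Fin kin × Fin kout

/-- An adversary: a conflict-free arrival schedule, a transmission environment and
transmitter/receiver failure functions. -/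
structure Adversary (kin kout : ℕ) where
  arrive : ℕ → ℕ × Fin kin × Fin kout
  conflictFree : ∀ i j : ℕ, i ≠ j → (arrive i).1 = (arrive j).1 →
    (arrive i).2.1 ≠ (arrive j).2.1
  T : Set ((Fin kin × ℕ) × (Fin kin × ℕ))
  T_front : ∀ l l' : Fin kin, ((l, 0), (l', 0)) ∈ T
  Ft : ℕ → ℕ → Bool
  Fr : ℕ → ℕ → Bool

/-- The lane component of a sensor reading: an incoming lane, ⊥ (not yet arrived),
or ⊤ (departed). -/
inductive LaneStatus (kin : ℕ) where
  | inLane (l : Fin kin)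
  | notArrived
  | finished

/-- The minimal sensor reading: front, lane and intent. -/
structure Reading (kin kout : ℕ) where
  front : Prop
  lane : LaneStatus kin
  intent : Fin kout

/-- Environment states record the adversary, the time, a queue for each incoming lane
and the set of departed agents. -/
structure EnvState (kin kout : ℕ) where
  adv : Adversary kin kout
  time : ℕ
  queue : Fin kin → List ℕ
  done : Set ℕ

/-- Local states: a memory state together with a sensor reading
(the minimal reading plus possibly extra sensor information). -/
abbrev LState (kin kout : ℕ) (Mem Extra : Type*) := Mem × Reading kin kout × Extra

/-- Global states: an environment state and local states for all agents. -/
abbrev GState (kin kout : ℕ) (Mem Extra : Type*) :=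
  EnvState kin kout × (ℕ → LState kin kout Mem Extra)

/-- A run. -/
abbrev Run (kin kout : ℕ) (Mem Extra : Type*) := ℕ → GState kin kout Mem Extra

/-- An action protocol maps each agent's local state to an action. -/
abbrev Prot (kin kout : ℕ) (Mem Extra : Type*) := ℕ → LState kin kout Mem Extra → Act

variable {kin kout : ℕ} {Mem Extra Msg : Type*}

/-- Agent `i` is at the front of some queue. -/
def isFront (e : EnvState kin kout) (i : ℕ) : Prop :=
  ∃ l : Fin kin, (e.queue l).head? = some i

/-- The (lane, position) of agent `i`, if it is in some queue. -/
def posAt (e : EnvState kin kout) (i : ℕ) : Option (Fin kin × ℕ) :=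
  if h : ∃ l : Fin kin, i ∈ e.queue l then some (h.choose, (e.queue h.choose).idxOf i)
  else none

/-- The intended departure lane of agent `i`, as given by the arrival schedule. -/
def intentOf (e : EnvState kin kout) (i : ℕ) : Fin kout := (e.adv.arrive i).2.2

/-- The move `(lane_i, intent_i)` of agent `i`, if it is in some queue. -/
def moveAt (e : EnvState kin kout) (i : ℕ) : Option (Move kin kout) :=
  (posAt e i).map (fun p => (p.1, intentOf e i))

/-- The minimal sensor reading of agent `i` in environment state `e`. -/
def minimalReading (e : EnvState kin kout) (i : ℕ) : Reading kin kout where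
  front := isFront e i
  lane :=
    if h : ∃ l : Fin kin, i ∈ e.queue l then LaneStatus.inLane h.choose
    else if i ∈ e.done then LaneStatus.finished else LaneStatus.notArrived
  intent := intentOf e i

/-- An information-exchange protocol: initial memories, extra sensor information,
a message function and a memory-update function. -/
structure IEP (kin kout : ℕ) (Mem Extra Msg : Type*) where
  initMem : ℕ → Mem
  extra : EnvState kin kout → ℕ → Extra
  msg : ℕ → LState kin kout Mem Extra → Act → Reading kin kout × Extra → Option Msg
  upd : ℕ → LState kin kout Mem Extra → Act → Set Msg → Mem

/-- One round of the system: agents act, queues are updated (dequeues for agents that go,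
enqueues for new arrivals), new sensor readings are taken, messages are broadcast and
received subject to the transmission environment and the failure functions, and memories
are updated. -/
def step (E : IEP kin kout Mem Extra Msg) (P : Prot kin kout Mem Extra)
    (g : GState kin kout Mem Extra) : GState kin kout Mem Extra :=
  let e := g.1
  let act : ℕ → Act := fun i => P i (g.2 i)
  let q' : Fin kin → List ℕ := fun l =>
    let q1 := match (e.queue l).head? with
      | some i => if act i = Act.go then (e.queue l).tail else e.queue l
      | none => e.queue l
    if h : ∃ i l', e.adv.arrive i = (e.time + 1, l, l') then q1 ++ [h.choose] else q1
  let done' : Set ℕ := e.done ∪ {i | isFront e i ∧ act i = Act.go}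
  let e' : EnvState kin kout := ⟨e.adv, e.time + 1, q', done'⟩
  let sens : ℕ → Reading kin kout × Extra := fun i => (minimalReading e' i, E.extra e' i)
  let rcv : ℕ → Set Msg := fun i =>
    if e.adv.Fr e.time i = true ∧ (posAt e' i).isSome = true then
      {m | ∃ j pj pi, E.msg j (g.2 j) (act j) (sens j) = some m ∧
            e.adv.Ft e.time j = true ∧
            posAt e' j = some pj ∧ posAt e' i = some pi ∧ (pj, pi) ∈ e.adv.T}
    else ∅
  (e', fun i => (E.upd i (g.2 i) (act i) (rcv i), sens i))

/-- An intersection context: an information-exchange protocol together with an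
adversary model. -/
structure Ctx (kin kout : ℕ) (Mem Extra Msg : Type*) where
  iep : IEP kin kout Mem Extra Msg
  adv : Set (Adversary kin kout)

/-- Initial global states: time 0, empty queues, no departed agents, an adversary
from the adversary model, and initial local states. -/
def Init (C : Ctx kin kout Mem Extra Msg) (g : GState kin kout Mem Extra) : Prop :=
  g.1.adv ∈ C.adv ∧ g.1.time = 0 ∧ (∀ l, g.1.queue l = []) ∧ g.1.done = ∅ ∧
  ∀ i, g.2 i = (C.iep.initMem i, minimalReading g.1 i, C.iep.extra g.1 i)

/-- The interpreted system `I_{γ,P}`: the set of runs of protocol `P` in context `γ`. -/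
def Runs (C : Ctx kin kout Mem Extra Msg) (P : Prot kin kout Mem Extra) :
    Set (Run kin kout Mem Extra) :=
  {r | Init C (r 0) ∧ ∀ m, r (m + 1) = step C.iep P (r m)}

/-- `front_i` holds at the point `(r,m)`. -/
def frontAt (r : Run kin kout Mem Extra) (m i : ℕ) : Prop := isFront (r m).1 i

/-- `going_i` abbreviates `front_i ∧ ◯¬front_i`. -/
def goingAt (r : Run kin kout Mem Extra) (m i : ℕ) : Prop :=
  frontAt r m i ∧ ¬ frontAt r (m + 1) i

/-- `GO(r,m)`: the set of agents that go through the intersection in round `m+1`. -/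
def GOs (r : Run kin kout Mem Extra) (m : ℕ) : Set ℕ := {i | goingAt r m i}

/-- Validity: an agent goes through the intersection only from the front of its queue. -/
def ValidityP (C : Ctx kin kout Mem Extra Msg) (P : Prot kin kout Mem Extra) : Prop :=
  ∀ r ∈ Runs C P, ∀ m i, goingAt r m i → frontAt r m i

/-- Safety: agents that go simultaneously have compatible moves. -/
def SafetyP (O : Move kin kout → Move kin kout → Prop)
    (C : Ctx kin kout Mem Extra Msg) (P : Prot kin kout Mem Extra) : Prop :=
  ∀ r ∈ Runs C P, ∀ m i j, i ≠ j → goingAt r m i → goingAt r m j →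
    ∀ mi mj, moveAt (r m).1 i = some mi → moveAt (r m).1 j = some mj → O mi mj

/-- Liveness: every agent at the front of a queue eventually goes. -/
def LivenessP (C : Ctx kin kout Mem Extra Msg) (P : Prot kin kout Mem Extra) : Prop :=
  ∀ r ∈ Runs C P, ∀ m i, frontAt r m i → ∃ m' ≥ m, goingAt r m' i

/-- An intersection protocol: an action protocol satisfying Validity, Safety and Liveness. -/
def IsIntersectionProtocol (O : Move kin kout → Move kin kout → Prop)
    (C : Ctx kin kout Mem Extra Msg) (P : Prot kin kout Mem Extra) : Prop :=
  ValidityP C P ∧ SafetyP O C P ∧ LivenessP C P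

/-- `safe-to-go_i` at `(r,m)`: `i` is at the front of its queue (position 0) and the moves
of the agents in `GO(r,m) ∪ {i}` are pairwise compatible. -/
def safeToGo (O : Move kin kout → Move kin kout → Prop)
    (r : Run kin kout Mem Extra) (m i : ℕ) : Prop :=
  (∃ p, posAt (r m).1 i = some p ∧ p.2 = 0) ∧
  ∀ j ∈ GOs r m ∪ {i}, ∀ k ∈ GOs r m ∪ {i}, j ≠ k →
    ∀ mj mk, moveAt (r m).1 j = some mj → moveAt (r m).1 k = some mk → O mj mk

/-- `P` has unnecessary waiting with respect to `γ`. -/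
def UnnecessaryWaiting (O : Move kin kout → Move kin kout → Prop)
    (C : Ctx kin kout Mem Extra Msg) (P : Prot kin kout Mem Extra) : Prop :=
  ∃ r ∈ Runs C P, ∃ m i, safeToGo O r m i ∧ i ∉ GOs r m

/-- The time at which agent `i` goes through the intersection in run `r` (∞ if never). -/
def gotime (r : Run kin kout Mem Extra) (i : ℕ) : ℕ∞ :=
  sInf {n : ℕ∞ | ∃ m : ℕ, goingAt r m i ∧ n = (m : ℕ∞)}

/-- `P` dominates `P'`: on all corresponding runs, every agent goes at least as early. -/
def Dominates (C : Ctx kin kout Mem Extra Msg) (P P' : Prot kin kout Mem Extra) : Prop :=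
  ∀ r ∈ Runs C P, ∀ r' ∈ Runs C P', r 0 = r' 0 → ∀ i, gotime r i ≤ gotime r' i

def StrictDominates (C : Ctx kin kout Mem Extra Msg) (P P' : Prot kin kout Mem Extra) : Prop :=
  Dominates C P P' ∧ ¬ Dominates C P' P

/-- `P` is optimal: no intersection protocol strictly dominates it. -/
def Optimal (O : Move kin kout → Move kin kout → Prop)
    (C : Ctx kin kout Mem Extra Msg) (P : Prot kin kout Mem Extra) : Prop :=
  ¬ ∃ P' : Prot kin kout Mem Extra,
      IsIntersectionProtocol O C P' ∧ StrictDominates C P' P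

/-- `P` lexicographically dominates `P'`. -/
def LexDominates (C : Ctx kin kout Mem Extra Msg) (P P' : Prot kin kout Mem Extra) : Prop :=
  ∀ r ∈ Runs C P, ∀ r' ∈ Runs C P', r 0 = r' 0 →
    (∀ m, GOs r m = GOs r' m) ∨
    ∃ m, (∀ k < m, GOs r k = GOs r' k) ∧ GOs r m ≠ GOs r' m ∧ GOs r' m ⊂ GOs r m

def StrictLexDominates (C : Ctx kin kout Mem Extra Msg) (P P' : Prot kin kout Mem Extra) :
    Prop :=
  LexDominates C P P' ∧ ¬ LexDominates C P' P

/-- `P` is lexicographically optimal: no intersection protocol strictly lexicographically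
dominates it. -/
def LexOptimal (O : Move kin kout → Move kin kout → Prop)
    (C : Ctx kin kout Mem Extra Msg) (P : Prot kin kout Mem Extra) : Prop :=
  ¬ ∃ P' : Prot kin kout Mem Extra,
      IsIntersectionProtocol O C P' ∧ StrictLexDominates C P' P

/-- Knowledge: `K_i φ` holds at `(r,m)` iff `φ` holds at all points of the system where
agent `i` has the same local state. -/
def Kn (S : Set (Run kin kout Mem Extra)) (i : ℕ)
    (φ : Run kin kout Mem Extra → ℕ → Prop) (r : Run kin kout Mem Extra) (m : ℕ) : Prop :=
  ∀ r' ∈ S, ∀ m', (r' m').2 i = (r m).2 i → φ r' m'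

/-- The adversary model has no failures. -/
def NoFailures (C : Ctx kin kout Mem Extra Msg) : Prop :=
  ∀ α ∈ C.adv, ∀ k i, α.Ft k i = true ∧ α.Fr k i = true

/-- Full information exchange: every agent broadcasts (an injective encoding of) its
entire local state in every round, and records every broadcast it receives. -/
def FullInfo (C : Ctx kin kout Mem Extra Msg) : Prop :=
  (∃ enc : LState kin kout Mem Extra → Msg, Function.Injective enc ∧
      ∀ i s a o, C.iep.msg i s a o = some (enc s)) ∧
  (∀ i s a, Function.Injective fun B : Set Msg => C.iep.upd i s a B)

/-- A sufficiently rich context: every agent that will be at the front of some lane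
broadcasts a message encoding its lane and intent, tagged as coming from the front;
no other message is tagged as a front message; and each agent records the
(lane, intent) pair of each front agent it hears from. -/
def SufficientlyRich (C : Ctx kin kout Mem Extra Msg) : Prop :=
  ∃ dec : Msg → Option (Move kin kout),
    (∀ i s a (o : Reading kin kout × Extra) (l : Fin kin),
        o.1.front → o.1.lane = LaneStatus.inLane l →
        ∃ msg, C.iep.msg i s a o = some msg ∧ dec msg = some (l, o.1.intent)) ∧
    (∀ i s a (o : Reading kin kout × Extra), ¬ o.1.front →
        ∀ msg, C.iep.msg i s a o = some msg → dec msg = none) ∧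
    (∃ rec : Mem → Set (Move kin kout),
        ∀ i s a B, rec (C.iep.upd i s a B) = {mv | ∃ msg ∈ B, dec msg = some mv})

/-- The set of agents at the front of a queue. -/
def FrontSet (e : EnvState kin kout) : Set ℕ := {i | isFront e i}

/-- `P` depends only on the agents at the front of their queues. -/
def DependsOnlyOnFront (C : Ctx kin kout Mem Extra Msg) (P : Prot kin kout Mem Extra) :
    Prop :=
  ∀ r ∈ Runs C P, ∀ r' ∈ Runs C P, ∀ m m' i,
    FrontSet (r m).1 = FrontSet (r' m').1 → P i ((r m).2 i) = P i ((r' m').2 i)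

/-- The choices of an adversary in a single round: arrivals, the transmission
environment and the failure values. -/
structure Choice (kin kout : ℕ) where
  arrivals : Set (ℕ × Fin kin × Fin kout)
  T : Set ((Fin kin × ℕ) × (Fin kin × ℕ))
  Ft : ℕ → Bool
  Fr : ℕ → Bool

/-- The choices of adversary `α` in round `m+1`. -/
def choiceAt (α : Adversary kin kout) (m : ℕ) : Choice kin kout where
  arrivals := {p | α.arrive p.1 = (m + 1, p.2.1, p.2.2)}
  T := α.T
  Ft := fun i => α.Ft m i
  Fr := fun i => α.Fr m i

/-- The adversary history `H(α,m) = ⟨α_0, …, α_{m-1}⟩`. -/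
def hist (α : Adversary kin kout) (m : ℕ) : List (Choice kin kout) :=
  (List.range m).map (choiceAt α)

/-- The adversary history of run `r` up to time `m`. -/
def histOf (r : Run kin kout Mem Extra) (m : ℕ) : List (Choice kin kout) :=
  hist (r 0).1.adv m

/-- An intersection policy: a map from adversary histories to sets of permitted moves. -/
abbrev Policy (kin kout : ℕ) := List (Choice kin kout) → Set (Move kin kout)

/-- The set `H_γ` of adversary histories of the context. -/
def Hists (C : Ctx kin kout Mem Extra Msg) : Set (List (Choice kin kout)) :=
  {h | ∃ α ∈ C.adv, ∃ m, h = hist α m}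

/-- A feasible infinite sequence of histories: one arising from a single adversary. -/
def Feasible (F : Set (Adversary kin kout)) (h : ℕ → List (Choice kin kout)) : Prop :=
  ∃ α ∈ F, ∀ m, h m = hist α m

/-- Conflict-freedom of an intersection policy. -/
def ConflictFree (O : Move kin kout → Move kin kout → Prop)
    (C : Ctx kin kout Mem Extra Msg) (σ : Policy kin kout) : Prop :=
  ∀ h ∈ Hists C, ∀ mv ∈ σ h, ∀ mv' ∈ σ h, mv ≠ mv' → O mv mv'

/-- Fairness of an intersection policy. -/
def FairPolicy (C : Ctx kin kout Mem Extra Msg) (σ : Policy kin kout) : Prop :=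
  ∀ h : ℕ → List (Choice kin kout), Feasible C.adv h →
    ∀ mv : Move kin kout, ∀ m, ∃ m' ≥ m, mv ∈ σ (h m')

/-- A correct intersection policy: conflict-free and fair. -/
def CorrectPolicy (O : Move kin kout → Move kin kout → Prop)
    (C : Ctx kin kout Mem Extra Msg) (σ : Policy kin kout) : Prop :=
  ConflictFree O C σ ∧ FairPolicy C σ

/-- A synchronous context: the time is encoded in each agent's local state. -/
def Synchronous (C : Ctx kin kout Mem Extra Msg) : Prop :=
  ∃ clock : LState kin kout Mem Extra → ℕ,
    ∀ P : Prot kin kout Mem Extra, ∀ r ∈ Runs C P, ∀ m i, clock ((r m).2 i) = m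

/-- The knowledge condition of the knowledge-based program `P^σ`:
`front_i ∧ (lane_i, intent_i) ∈ σ`. -/
def phiSigma (σ : Policy kin kout) (i : ℕ) (r : Run kin kout Mem Extra) (m : ℕ) : Prop :=
  frontAt r m i ∧ ∃ mv, moveAt (r m).1 i = some mv ∧ mv ∈ σ (histOf r m)

/-- `P` implements the knowledge-based program `if K_i φ_i then go else noop` in `γ`. -/
def Implements (C : Ctx kin kout Mem Extra Msg) (P : Prot kin kout Mem Extra)
    (φ : ℕ → Run kin kout Mem Extra → ℕ → Prop) : Prop :=
  ∀ r ∈ Runs C P, ∀ m i, (P i ((r m).2 i) = Act.go ↔ Kn (Runs C P) i (φ i) r m)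

/-- Behavioral equivalence: the protocols take the same actions at all reachable states. -/
def BehEq (C : Ctx kin kout Mem Extra Msg) (P P' : Prot kin kout Mem Extra) : Prop :=
  (∀ r ∈ Runs C P, ∀ m i, P i ((r m).2 i) = P' i ((r m).2 i)) ∧
  (∀ r ∈ Runs C P', ∀ m i, P i ((r m).2 i) = P' i ((r m).2 i))

/-- `γ` is `σ`-aware. -/
def SigmaAware (C : Ctx kin kout Mem Extra Msg) (σ : Policy kin kout) : Prop :=
  ∀ P : Prot kin kout Mem Extra, ∀ r ∈ Runs C P, ∀ m i (l : Fin kin) (l' : Fin kout),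
    (l, l') ∈ σ (histOf r m) → i ∈ (r m).1.queue l →
    Kn (Runs C P) i (fun r' m' => (l, l') ∈ σ (histOf r' m')) r m

/-- `γ` is `next`-aware. -/
def NextAware (C : Ctx kin kout Mem Extra Msg)
    (next : List (Choice kin kout) → Fin kin) : Prop :=
  ∀ P : Prot kin kout Mem Extra, ∀ r ∈ Runs C P, ∀ m i (l : Fin kin),
    next (histOf r m) = l →
    Kn (Runs C P) i (fun r' m' => next (histOf r' m') = l) r m

/-- Cyclic distance from `a` to `b` (mod `kin`). -/
def distC (a b : Fin kin) : ℕ := (b.val + kin - a.val) % kin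

/-- `l` lies in the cyclic interval `[a, b)` of incoming lanes. -/
def inCyc (a b l : Fin kin) : Prop := distC a l < distC a b

/-- `mv` is compatible with every move in `S`. -/
def compatAll (O : Move kin kout → Move kin kout → Prop)
    (S : Set (Move kin kout)) (mv : Move kin kout) : Prop :=
  ∀ mv' ∈ S, O mv mv'

/-- The proposition `V_i` of the knowledge-based program `𝐏`. -/
def Vprop (O : Move kin kout → Move kin kout → Prop) (σ : Policy kin kout)
    (next : List (Choice kin kout) → Fin kin) (i : ℕ)
    (r : Run kin kout Mem Extra) (m : ℕ) : Prop :=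
  ∃ mv, moveAt (r m).1 i = some mv ∧ mv ∉ σ (histOf r m) ∧
    (∀ j mj, goingAt r m j → moveAt (r m).1 j = some mj →
        mj ∈ σ (histOf r m) → O mv mj) ∧
    (∀ j mj, j ≠ i → goingAt r m j → moveAt (r m).1 j = some mj →
        mj ∉ σ (histOf r m) → inCyc (next (histOf r m)) mv.1 mj.1 → O mv mj)

/-- The knowledge condition of the knowledge-based program `𝐏`:
`front_i ∧ ((lane_i, intent_i) ∈ σ ∨ V_i)`. -/
def phiP (O : Move kin kout → Move kin kout → Prop) (σ : Policy kin kout)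
    (next : List (Choice kin kout) → Fin kin) (i : ℕ)
    (r : Run kin kout Mem Extra) (m : ℕ) : Prop :=
  frontAt r m i ∧
    ((∃ mv, moveAt (r m).1 i = some mv ∧ mv ∈ σ (histOf r m)) ∨ Vprop O σ next i r m)

/-- Fairness of a `next` function. -/
def FairNext (C : Ctx kin kout Mem Extra Msg)
    (next : List (Choice kin kout) → Fin kin) : Prop :=
  ∀ h : ℕ → List (Choice kin kout), Feasible C.adv h →
    ∀ m (l : Fin kin), ∃ m' ≥ m, next (h m') = l

/-- Fairness of a pair `(σ, next)`. -/
def PairFair (O : Move kin kout → Move kin kout → Prop)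
    (C : Ctx kin kout Mem Extra Msg) (σ : Policy kin kout)
    (next : List (Choice kin kout) → Fin kin) : Prop :=
  ∀ h : ℕ → List (Choice kin kout), Feasible C.adv h →
    ∀ m (mv : Move kin kout), ∃ m' ≥ m,
      mv ∈ σ (h m') ∨ (next (h m') = mv.1 ∧ compatAll O (σ (h m')) mv)

/-- `next(h) = |h| mod |L_in|` at time `t`. -/
def nextL (hkin : 0 < kin) (t : ℕ) : Fin kin := ⟨t % kin, Nat.mod_lt _ hkin⟩

/-- The stages of the construction of the set `Pos_i`, starting from the lane `nxt` and
proceeding in cyclic order; `M` is the set of moves received from front agents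
(empty when there is no communication). -/
def posStage (hkin : 0 < kin) (O : Move kin kout → Move kin kout → Prop)
    (M : Set (Move kin kout)) (nxt : Fin kin) : ℕ → Set (Move kin kout)
  | 0 => ∅
  | t + 1 =>
    let S := posStage hkin O M nxt t
    let l : Fin kin := ⟨(nxt.val + t) % kin, Nat.mod_lt _ hkin⟩
    if ∃ l' : Fin kout, (l, l') ∈ M then
      S ∪ {mv | mv.1 = l ∧ mv ∈ M ∧ compatAll O S mv}
    else
      S ∪ {mv | mv.1 = l ∧ compatAll O S mv}

/-- The set `Pos_i` computed from the received moves `M`, the lane `nxt = next` and the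
agent's own lane `lanei`. -/
def PosSet (hkin : 0 < kin) (O : Move kin kout → Move kin kout → Prop)
    (M : Set (Move kin kout)) (nxt lanei : Fin kin) : Set (Move kin kout) :=
  posStage hkin O M nxt (distC nxt lanei)

/-- The stage `Pos_i^l` of the construction of `Pos_i`, for a lane `l` in the cyclic
interval `[nxt, lane_i)`. -/
def PosUpTo (hkin : 0 < kin) (O : Move kin kout → Move kin kout → Prop)
    (M : Set (Move kin kout)) (nxt l : Fin kin) : Set (Move kin kout) :=
  posStage hkin O M nxt (distC nxt l + 1)

/-- The adversary model with no failures. -/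
def NFadv (kin kout : ℕ) : Set (Adversary kin kout) :=
  {α | ∀ k i, α.Ft k i = true ∧ α.Fr k i = true}

/-- The adversary model with crash failures. -/
def CRadv (kin kout : ℕ) : Set (Adversary kin kout) :=
  {α | (∀ k i, α.Fr k i = true) ∧
    ∀ k i, α.Ft k i = false → ∀ k', k < k' → α.Ft k' i = false}

/-- The adversary model with sending omissions. -/
def SOadv (kin kout : ℕ) : Set (Adversary kin kout) :=
  {α | ∀ k i, α.Fr k i = true}

/-- The information-exchange protocol of `γ_∅`: a single memory state, no messages,
and sensor readings `⟨front_i, lane_i, intent_i, time_i⟩`. -/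
def E0 (kin kout : ℕ) : IEP kin kout Unit ℕ Empty where
  initMem _ := ()
  extra e _ := e.time
  msg _ _ _ _ := none
  upd _ _ _ _ := ()

/-- The context `γ_∅(F)`. -/
def gammaEmpty (kin kout : ℕ) (F : Set (Adversary kin kout)) : Ctx kin kout Unit ℕ Empty :=
  ⟨E0 kin kout, F⟩

/-- The protocol `P^∅`: go iff at the front and own move compatible with `Pos_i`. -/
def Pempty (hkin : 0 < kin) (O : Move kin kout → Move kin kout → Prop) :
    Prot kin kout Unit ℕ := fun _ s =>
  match s.2.1.lane with
  | LaneStatus.inLane l =>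
      if s.2.1.front ∧ compatAll O (PosSet hkin O ∅ (nextL hkin s.2.2) l) (l, s.2.1.intent)
      then Act.go else Act.noop
  | _ => Act.noop

/-- The information-exchange protocol of `γ_intent`: exactly the agents at the front of a
lane broadcast `(lane_i, intent_i)`; the memory is the set of moves received in the
current round; sensor readings are `⟨front_i, lane_i, intent_i, time_i⟩`. -/
def Eintent (kin kout : ℕ) : IEP kin kout (Set (Move kin kout)) ℕ (Move kin kout) where
  initMem _ := ∅
  extra e _ := e.time
  msg _ _ _ o :=
    if o.1.front then
      match o.1.lane with
      | LaneStatus.inLane l => some (l, o.1.intent)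
      | _ => none
    else none
  upd _ _ _ B := B

/-- The context `γ_intent(F)`. -/
def gammaIntent (kin kout : ℕ) (F : Set (Adversary kin kout)) :
    Ctx kin kout (Set (Move kin kout)) ℕ (Move kin kout) :=
  ⟨Eintent kin kout, F⟩

/-- The protocol `P^intent`: go iff at the front and own move compatible with `Pos_i`
computed from the received moves. -/
def Pintent (hkin : 0 < kin) (O : Move kin kout → Move kin kout → Prop) :
    Prot kin kout (Set (Move kin kout)) ℕ := fun _ s =>
  match s.2.1.lane with
  | LaneStatus.inLane l =>
      if s.2.1.front ∧
          compatAll O (PosSet hkin O s.1 (nextL hkin s.2.2) l) (l, s.2.1.intent)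
      then Act.go else Act.noop
  | _ => Act.noop

end Inter

open Inter

/-! In a synchronous context the local state of an agent determines the time `n`, so whether
it knows `φ^σ` there depends only on the actions the protocol takes before time `n`. An
implementation can therefore be defined by recursion on time, and any two implementations
agree on reachable states by induction on time. -/

namespace Inter

variable {kin kout : ℕ} {Mem Extra Msg : Type*}

lemma Act.eq_of_eq_go_iff {a b : Act} (h : a = Act.go ↔ b = Act.go) : a = b := by
  cases a <;> cases b <;> simp_all

section Runs

variable (C : Ctx kin kout Mem Extra Msg)

def runOf (P : Prot kin kout Mem Extra) (g0 : GState kin kout Mem Extra) :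
    Run kin kout Mem Extra :=
  fun m => (step C.iep P)^[m] g0

lemma runOf_mem_runs (P : Prot kin kout Mem Extra) {g0 : GState kin kout Mem Extra}
    (h : Init C g0) : runOf C P g0 ∈ Runs C P :=
  ⟨h, fun _ => Function.iterate_succ_apply' _ _ _⟩

lemma step_congr (P P' : Prot kin kout Mem Extra) {g : GState kin kout Mem Extra}
    (h : ∀ i, P i (g.2 i) = P' i (g.2 i)) : step C.iep P g = step C.iep P' g := by
  simp only [step, h]

def AgreeBefore (P P' : Prot kin kout Mem Extra) (n : ℕ) : Prop :=
  ∀ r ∈ Runs C P, ∀ m < n, ∀ i, P i ((r m).2 i) = P' i ((r m).2 i)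

variable {C}

lemma AgreeBefore.eq_of_le {P P' : Prot kin kout Mem Extra} {n : ℕ}
    (hag : AgreeBefore C P P' n) {r r' : Run kin kout Mem Extra}
    (hr : r ∈ Runs C P) (hr' : r' ∈ Runs C P') (h0 : r 0 = r' 0) :
    ∀ m ≤ n, r m = r' m
  | 0, _ => h0
  | m + 1, hm => by
    rw [hr.2, hr'.2, ← AgreeBefore.eq_of_le hag hr hr' h0 m (by omega),
      step_congr C P P' (hag r hr m hm)]

lemma AgreeBefore.symm {P P' : Prot kin kout Mem Extra} {n : ℕ}
    (hag : AgreeBefore C P P' n) : AgreeBefore C P' P n := by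
  intro r' hr' m hm i
  have hr := runOf_mem_runs C P hr'.1
  rw [← hag.eq_of_le hr hr' rfl m hm.le]
  exact (hag _ hr m hm i).symm

end Runs

def KnLocal (S : Set (Run kin kout Mem Extra)) (i : ℕ)
    (φ : Run kin kout Mem Extra → ℕ → Prop) (s : LState kin kout Mem Extra) : Prop :=
  ∀ r ∈ S, ∀ m, (r m).2 i = s → φ r m

lemma phiSigma_congr (σ : Policy kin kout) (i : ℕ) {r r' : Run kin kout Mem Extra} {m : ℕ}
    (h0 : r 0 = r' 0) (hm : r m = r' m) : phiSigma σ i r m ↔ phiSigma σ i r' m := by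
  unfold phiSigma frontAt histOf
  rw [h0, hm]

section Synchronous

def IsClock (C : Ctx kin kout Mem Extra Msg) (clk : LState kin kout Mem Extra → ℕ) : Prop :=
  ∀ P : Prot kin kout Mem Extra, ∀ r ∈ Runs C P, ∀ m i, clk ((r m).2 i) = m

variable {C : Ctx kin kout Mem Extra Msg} {clk : LState kin kout Mem Extra → ℕ}

lemma knLocal_phiSigma_congr
    (hclk : IsClock C clk)
    (σ : Policy kin kout) {P P' : Prot kin kout Mem Extra} {n : ℕ}
    (hag : AgreeBefore C P P' n) (i : ℕ) {s : LState kin kout Mem Extra} (hs : clk s ≤ n) :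
    KnLocal (Runs C P) i (phiSigma σ i) s ↔ KnLocal (Runs C P') i (phiSigma σ i) s := by
  suffices key : ∀ {Q Q' : Prot kin kout Mem Extra}, AgreeBefore C Q Q' n →
      KnLocal (Runs C Q) i (phiSigma σ i) s → KnLocal (Runs C Q') i (phiSigma σ i) s from
    ⟨key hag, key hag.symm⟩
  intro Q Q' hag hQ r' hr' m hs'
  have hm : m ≤ n := by rw [← hclk Q' r' hr' m i, hs']; exact hs
  have hr := runOf_mem_runs C Q hr'.1
  have h0 : runOf C Q (r' 0) 0 = r' 0 := rfl
  have heq := hag.eq_of_le hr hr' h0 m hm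
  exact (phiSigma_congr σ i h0 heq).mp (hQ _ hr m (heq ▸ hs'))

variable (C) (clk) (σ : Policy kin kout)

/-- The `n`-th approximation of the implementation of `P^σ`: its actions at local states
of time `m < n` are those of `canonicalProt`, and it does nothing at later times. -/
def approxProt : ℕ → Prot kin kout Mem Extra
  | 0 => fun _ _ => Act.noop
  | n + 1 => fun j t =>
    if clk t = n then
      if KnLocal (Runs C (approxProt n)) j (phiSigma σ j) t then Act.go else Act.noop
    else approxProt n j t

def canonicalProt : Prot kin kout Mem Extra :=
  fun j t => approxProt C clk σ (clk t + 1) j t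

lemma approxProt_eq_canonicalProt {n : ℕ} {t : LState kin kout Mem Extra} (ht : clk t < n)
    (j : ℕ) : approxProt C clk σ n j t = canonicalProt C clk σ j t := by
  induction n with
  | zero => omega
  | succ n ih =>
    by_cases htn : clk t = n
    · simp only [canonicalProt, htn]
    · simp only [approxProt, if_neg htn]
      exact ih (by omega)

variable {clk}

lemma agreeBefore_approxProt_canonicalProt
    (hclk : IsClock C clk)
    (n : ℕ) : AgreeBefore C (approxProt C clk σ n) (canonicalProt C clk σ) n :=
  fun r hr m hm i => approxProt_eq_canonicalProt C clk σ ((hclk _ r hr m i).trans_lt hm) i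

lemma canonicalProt_implements
    (hclk : IsClock C clk) :
    Implements C (canonicalProt C clk σ) (phiSigma σ) := by
  intro r hr m i
  have hm := hclk _ r hr m i
  have hgo : canonicalProt C clk σ i ((r m).2 i) = Act.go ↔
      KnLocal (Runs C (approxProt C clk σ m)) i (phiSigma σ i) ((r m).2 i) := by
    by_cases hK : KnLocal (Runs C (approxProt C clk σ m)) i (phiSigma σ i) ((r m).2 i) <;>
      simp [canonicalProt, approxProt, hm, hK]
  exact hgo.trans (knLocal_phiSigma_congr hclk σ
    (agreeBefore_approxProt_canonicalProt C σ hclk m) i hm.le)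

variable {C σ}

lemma Implements.agreeBefore
    (hclk : IsClock C clk)
    {P P' : Prot kin kout Mem Extra} (hP : Implements C P (phiSigma σ))
    (hP' : Implements C P' (phiSigma σ)) : ∀ n, AgreeBefore C P P' n
  | 0 => fun _ _ _ hm => absurd hm (Nat.not_lt_zero _)
  | n + 1 => by
    have hag := Implements.agreeBefore hclk hP hP' n
    intro r hr m hm i
    rcases Nat.lt_succ_iff_lt_or_eq.mp hm with hm | rfl
    · exact hag r hr m hm i
    have hr' := runOf_mem_runs C P' hr.1
    have heq := hag.eq_of_le hr hr' rfl m le_rfl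
    have hP'm : P' i ((r m).2 i) = Act.go ↔
        KnLocal (Runs C P') i (phiSigma σ i) ((r m).2 i) := by
      have h := hP' _ hr' m i
      unfold Kn at h
      rwa [← heq] at h
    exact Act.eq_of_eq_go_iff ((hP r hr m i).trans
      ((knLocal_phiSigma_congr hclk σ hag i (hclk P r hr m i).le).trans hP'm.symm))

lemma Implements.behEq
    (hclk : IsClock C clk)
    {P P' : Prot kin kout Mem Extra} (hP : Implements C P (phiSigma σ))
    (hP' : Implements C P' (phiSigma σ)) : BehEq C P P' :=
  ⟨fun r hr m i => hP.agreeBefore hclk hP' (m + 1) r hr m m.lt_succ_self i,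
    fun r hr m i => ((hP.agreeBefore hclk hP' (m + 1)).symm r hr m m.lt_succ_self i).symm⟩

end Synchronous

section Safety

variable {C : Ctx kin kout Mem Extra Msg} {P : Prot kin kout Mem Extra}

lemma mem_queue_of_mem_queue_step {E : IEP kin kout Mem Extra Msg}
    {g : GState kin kout Mem Extra} {i : ℕ} {l : Fin kin}
    (h : i ∈ (step E P g).1.queue l) :
    i ∈ g.1.queue l ∨ (g.1.adv.arrive i).2.1 = l := by
  have hdeq : ∀ x, x ∈ (match (g.1.queue l).head? with
      | some i => if P i (g.2 i) = Act.go then (g.1.queue l).tail else g.1.queue l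
      | none => g.1.queue l) → x ∈ g.1.queue l := by
    intro x hx
    split at hx
    · split at hx
      · exact List.mem_of_mem_tail hx
      · exact hx
    · exact hx
  simp only [step] at h
  split at h
  · rename_i hnew
    rcases List.mem_append.mp h with h | h
    · exact .inl (hdeq i h)
    · rw [List.mem_singleton.mp h, hnew.choose_spec.choose_spec]
      exact .inr rfl
  · exact .inl (hdeq i h)

lemma arrive_lane_of_mem_queue {r : Run kin kout Mem Extra} (hr : r ∈ Runs C P) :
    ∀ m i l, i ∈ (r m).1.queue l → ((r m).1.adv.arrive i).2.1 = l
  | 0, i, l, h => by simp [hr.1.2.2.1 l] at h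
  | m + 1, i, l, h => by
    rw [hr.2 m] at h ⊢
    exact (mem_queue_of_mem_queue_step h).elim (arrive_lane_of_mem_queue hr m i l) id

lemma head_queue_of_isFront {e : EnvState kin kout}
    (hlane : ∀ i l, i ∈ e.queue l → (e.adv.arrive i).2.1 = l)
    {i : ℕ} {mv : Move kin kout} (hf : isFront e i) (hm : moveAt e i = some mv) :
    (e.queue mv.1).head? = some i := by
  obtain ⟨l, hl⟩ := hf
  have hmem : i ∈ e.queue l := List.mem_of_mem_head? hl
  have hex : ∃ l : Fin kin, i ∈ e.queue l := ⟨l, hmem⟩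
  simp only [moveAt, posAt, dif_pos hex, Option.map_some, Option.some_inj] at hm
  rw [← hm, ← hlane i _ hex.choose_spec, hlane i l hmem]
  exact hl

lemma act_eq_go_of_goingAt {r : Run kin kout Mem Extra} (hr : r ∈ Runs C P) {m i : ℕ}
    (hg : goingAt r m i) : P i ((r m).2 i) = Act.go := by
  by_contra hnoop
  obtain ⟨⟨l, hl⟩, hgone⟩ := hg
  refine hgone ⟨l, ?_⟩
  rw [hr.2 m]
  simp only [step, hl, if_neg hnoop]
  split
  · rw [List.head?_append_of_ne_nil _ (List.ne_nil_of_mem (List.mem_of_mem_head? hl))]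
    exact hl
  · exact hl

/-- Going agents know, hence satisfy, `φ^σ`; two distinct front agents have distinct moves,
which conflict-freedom of `σ` makes compatible. -/
lemma Implements.safetyP {O : Move kin kout → Move kin kout → Prop} {σ : Policy kin kout}
    (hcf : ConflictFree O C σ) (hP : Implements C P (phiSigma σ)) : SafetyP O C P := by
  intro r hr m i j hij hgi hgj mi mj hmi hmj
  have hlane := arrive_lane_of_mem_queue hr m
  obtain ⟨-, mi', hmi', hσi⟩ := (hP r hr m i).mp (act_eq_go_of_goingAt hr hgi) r hr m rfl
  obtain ⟨-, mj', hmj', hσj⟩ := (hP r hr m j).mp (act_eq_go_of_goingAt hr hgj) r hr m rfl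
  obtain rfl : mi' = mi := Option.some_inj.mp (hmi'.symm.trans hmi)
  obtain rfl : mj' = mj := Option.some_inj.mp (hmj'.symm.trans hmj)
  have hne : mi' ≠ mj' := by
    rintro rfl
    have hi := head_queue_of_isFront hlane hgi.1 hmi
    have hj := head_queue_of_isFront hlane hgj.1 hmj
    exact hij (Option.some_inj.mp (hi.symm.trans hj))
  exact hcf _ ⟨(r 0).1.adv, hr.1.1, m, rfl⟩ _ hσi _ hσj hne

end Safety

end Inter

open Inter

theorem kbp_sigma_implementation_general
    {kin kout : ℕ} {Mem Extra Msg : Type*}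
    (O : Move kin kout → Move kin kout → Prop)
    (C : Ctx kin kout Mem Extra Msg)
    (hsync : Synchronous C) (σ : Policy kin kout) :
    (∃ P : Prot kin kout Mem Extra, Implements C P (phiSigma σ)) ∧
    (∀ P P' : Prot kin kout Mem Extra,
        Implements C P (phiSigma σ) → Implements C P' (phiSigma σ) → BehEq C P P') ∧
    (CorrectPolicy O C σ →
      ∀ P : Prot kin kout Mem Extra, Implements C P (phiSigma σ) →
        SafetyP O C P ∧ ValidityP C P) := by
  obtain ⟨clk, hclk⟩ := hsync
  exact ⟨⟨_, canonicalProt_implements C σ hclk⟩, fun _ _ hP hP' => hP.behEq hclk hP',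
    fun hcorr _ hP => ⟨hP.safetyP hcorr.1, fun _ _ _ _ hgo => hgo.1⟩⟩

/-- For every synchronous intersection context `γ` and intersection policy
`σ`, there exists an implementation of the knowledge-based program `P^σ`, any two
implementations are behaviorally equivalent, and if `σ` is correct then every
implementation satisfies Safety and Validity. -/
theorem kbp_sigma_implementation
    {kin kout : ℕ} {Mem Extra Msg : Type*}
    (O : Move kin kout → Move kin kout → Prop)
    (hO : ∀ a b, O a b → O b a)
    (C : Ctx kin kout Mem Extra Msg)
    (hsync : Synchronous C) (σ : Policy kin kout) :
    (∃ P : Prot kin kout Mem Extra, Implements C P (phiSigma σ)) ∧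
    (∀ P P' : Prot kin kout Mem Extra,
        Implements C P (phiSigma σ) → Implements C P' (phiSigma σ) → BehEq C P P') ∧
    (CorrectPolicy O C σ →
      ∀ P : Prot kin kout Mem Extra, Implements C P (phiSigma σ) →
        SafetyP O C P ∧ ValidityP C P) :=
  kbp_sigma_implementation_general O C hsync σ
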